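/- arXiv:2309.03466 — 4 statements merged into one kernel-verified Lean document; each statement's English description precedes it below -/
import Mathlib

section
/- Let d ≥ 1 be an integer, let σ > 0, σ_wm > 0, Δsq ≥ 0 and p > 0 be real numbers. Define σ_mix² = (0.5/(0.5+p))·σ² + (p/(0.5+p))·σ_wm² + (0.5p/(0.5+p)²)·Δsq, α = (0.5+p)/(1+p), K = log(α·σ/((1−α)·σ_mix)), and η* = d·(σ_mix² + σ² − 2·σ_mix·σ·√(1 − (K/(2d))·(σ_mix² − σ²)))/(σ_mix² − σ²). Assume: (1) (p/(0.5+p))·(σ_wm² − σ²) + (0.5p/(0.5+p)²)·Δsq > 0; (2) p > 0.5·√(0.5/(0.5+p) + (p/(0.5+p))·(σ_wm²/σ²) + (0.5p/(0.5+p)²)·(Δsq/σ²)) − 0.5; and (3) K·(σ_mix² − σ²) ≤ 2d. Then for every σ_I ≥ 0, Φ((η* + d)/√(d·(σ_mix² + σ_I²))) > Φ((d − η*)/√(d·(σ² + σ_I²))); that is, the input-level smoothness of the optimal watermarked linear classifier on the target class strictly exceeds that on the other class. -/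
set_option maxHeartbeats 1000000

open MeasureTheory ProbabilityTheory Real

/-- The standard normal cumulative distribution function. -/
noncomputable def Phi (t : ℝ) : ℝ :=
  ((gaussianReal 0 1) (Set.Iic t)).toReal

lemma Phi_strictMono : StrictMono Phi := by
  intro a b hab
  unfold Phi
  have hsplit : (Set.Iic b : Set ℝ) = Set.Iic a ∪ Set.Ioc a b :=
    (Set.Iic_union_Ioc_eq_Iic hab.le).symm
  have hd : Disjoint (Set.Iic a) (Set.Ioc a b) := Set.Iic_disjoint_Ioc le_rfl
  have hpos : 0 < gaussianReal 0 1 (Set.Ioc a b) := by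
    rw [pos_iff_ne_zero]
    intro h0
    have := (gaussianReal_absolutelyContinuous' 0 (by norm_num)) h0
    simp [Real.volume_Ioc, hab] at this
    linarith
  rw [hsplit, measure_union hd measurableSet_Ioc]
  have h1 : gaussianReal 0 1 (Set.Iic a) ≠ ⊤ := measure_ne_top _ _
  have h2 : gaussianReal 0 1 (Set.Ioc a b) ≠ ⊤ := measure_ne_top _ _
  rw [ENNReal.toReal_add h1 h2]
  have : 0 < (gaussianReal 0 1 (Set.Ioc a b)).toReal := ENNReal.toReal_pos hpos.ne' h2
  linarith

/-- Input-level smoothness discrepancy for the optimal watermarked linear classifier. -/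
theorem input_smoothness_discrepancy_watermarked
    (d : ℕ) (hd : 1 ≤ d)
    (σ σwm Δsq p : ℝ) (hσ : 0 < σ) (hσwm : 0 < σwm) (hΔ : 0 ≤ Δsq) (hp : 0 < p)
    (σmix2 : ℝ)
    (hmix : σmix2 = (0.5 / (0.5 + p)) * σ ^ 2 + (p / (0.5 + p)) * σwm ^ 2
      + (0.5 * p / (0.5 + p) ^ 2) * Δsq)
    (α : ℝ) (hα : α = (0.5 + p) / (1 + p))
    (K : ℝ) (hK : K = Real.log (α * σ / ((1 - α) * Real.sqrt σmix2)))
    (η : ℝ)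
    (hη : η = d * (σmix2 + σ ^ 2
      - 2 * Real.sqrt σmix2 * σ * Real.sqrt (1 - (K / (2 * d)) * (σmix2 - σ ^ 2)))
      / (σmix2 - σ ^ 2))
    (h1 : (p / (0.5 + p)) * (σwm ^ 2 - σ ^ 2) + (0.5 * p / (0.5 + p) ^ 2) * Δsq > 0)
    (h2 : p > 0.5 * Real.sqrt (0.5 / (0.5 + p) + (p / (0.5 + p)) * (σwm ^ 2 / σ ^ 2)
      + (0.5 * p / (0.5 + p) ^ 2) * (Δsq / σ ^ 2)) - 0.5)
    (h3 : K * (σmix2 - σ ^ 2) ≤ 2 * d) :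
    ∀ σI : ℝ, 0 ≤ σI →
      Phi ((η + d) / Real.sqrt (d * (σmix2 + σI ^ 2)))
        > Phi ((d - η) / Real.sqrt (d * (σ ^ 2 + σI ^ 2))) := by
  have h05p : (0:ℝ) < 0.5 + p := by linarith
  have h1p : (0:ℝ) < 1 + p := by linarith
  have hdpos : (0:ℝ) < (d:ℝ) := by exact_mod_cast Nat.lt_of_lt_of_le Nat.zero_lt_one hd
  have hd1 : (1:ℝ) ≤ (d:ℝ) := by exact_mod_cast hd
  -- σmix2 - σ² equals the quantity in h1
  have hdiff : σ ^ 2 < σmix2 := by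
    have : σmix2 - σ ^ 2 = (p / (0.5 + p)) * (σwm ^ 2 - σ ^ 2)
        + (0.5 * p / (0.5 + p) ^ 2) * Δsq := by
      rw [hmix]; field_simp; ring
    linarith [this ▸ h1]
  have hσmix2 : 0 < σmix2 := lt_trans (by positivity) hdiff
  obtain ⟨s, hsdef⟩ : ∃ s : ℝ, s = Real.sqrt σmix2 := ⟨_, rfl⟩
  rw [← hsdef] at hK hη
  have hs2 : s ^ 2 = σmix2 := by rw [hsdef]; exact Real.sq_sqrt hσmix2.le
  have hs : 0 < s := by rw [hsdef]; exact Real.sqrt_pos.mpr hσmix2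
  have hst : σ < s := by nlinarith [hs2, hdiff]
  -- h2 gives s < (1+2p)σ
  have harg : 0.5 / (0.5 + p) + (p / (0.5 + p)) * (σwm ^ 2 / σ ^ 2)
      + (0.5 * p / (0.5 + p) ^ 2) * (Δsq / σ ^ 2) = σmix2 / σ ^ 2 := by
    rw [hmix]; field_simp
  rw [harg] at h2
  have hsqdiv : Real.sqrt (σmix2 / σ ^ 2) = s / σ := by
    rw [hsdef, Real.sqrt_div hσmix2.le, Real.sqrt_sq hσ.le]
  rw [hsqdiv] at h2
  have hsσ : s < (1 + 2 * p) * σ := by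
    have := (div_lt_iff₀ hσ).mp (by linarith : s / σ < 2 * p + 1)
    linarith
  -- K > 0
  have hKarg : α * σ / ((1 - α) * s) = ((1 + 2 * p) * σ) / s := by
    rw [hα]; field_simp; ring
  have hKpos : 0 < K := by
    rw [hK, hKarg]
    exact Real.log_pos (by rw [lt_div_iff₀ hs]; linarith)
  -- the square-root factor r
  obtain ⟨r, hrdef⟩ : ∃ r : ℝ, r = Real.sqrt (1 - (K / (2 * d)) * (σmix2 - σ ^ 2)) := ⟨_, rfl⟩
  rw [← hrdef] at hη
  have hr0 : 0 ≤ r := hrdef ▸ Real.sqrt_nonneg _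
  have hnn : 0 ≤ 1 - (K / (2 * d)) * (σmix2 - σ ^ 2) := by
    have h2d : (0:ℝ) < 2 * (d:ℝ) := by positivity
    rw [div_mul_eq_mul_div, sub_nonneg, div_le_one h2d]
    exact h3
  have hr1 : r < 1 := by
    have hlt : 1 - (K / (2 * d)) * (σmix2 - σ ^ 2) < 1 := by
      have : 0 < (K / (2 * d)) * (σmix2 - σ ^ 2) := by
        apply mul_pos (by positivity) (by linarith)
      linarith
    calc r = Real.sqrt (1 - (K / (2 * d)) * (σmix2 - σ ^ 2)) := hrdef
      _ < Real.sqrt 1 := Real.sqrt_lt_sqrt hnn (by simpa using hlt)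
      _ = 1 := Real.sqrt_one
  -- key identity for η
  have hηid : η * (σmix2 - σ ^ 2) = d * (σmix2 + σ ^ 2 - 2 * s * σ * r) := by
    rw [eq_div_iff (sub_ne_zero.mpr hdiff.ne')] at hη
    exact hη
  have hηid' : η * (s ^ 2 - σ ^ 2) = d * (s ^ 2 + σ ^ 2 - 2 * s * σ * r) := by
    rw [hs2]; exact hηid
  -- η > 0
  have hηpos : 0 < η := by
    have hd2 : 0 < s ^ 2 - σ ^ 2 := by nlinarith [hst, hσ]
    have hrhs : 0 < (d:ℝ) * (s ^ 2 + σ ^ 2 - 2 * s * σ * r) := by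
      have h2r := mul_pos (mul_pos hs hσ) (sub_pos.mpr hr1)
      have hsq2 : 0 < (s - σ) ^ 2 := pow_pos (sub_pos.mpr hst) 2
      nlinarith [h2r, hsq2, hdpos, hd1]
    nlinarith [hηid', hrhs, hd2]
  -- key inequality : (d - η) * s < (η + d) * σ
  have e1 : ((η + d) * σ - (d - η) * s) * (s - σ) = 2 * d * s * σ * (1 - r) := by
    linear_combination hηid'
  have hkey : (d - η) * s < (η + d) * σ := by
    nlinarith [e1, mul_pos (mul_pos (mul_pos (mul_pos (by norm_num : (0:ℝ) < 2) hdpos) hs) hσ)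
      (by linarith : (0:ℝ) < 1 - r), hst]
  -- conclusion
  intro σI hσI
  apply Phi_strictMono
  have hA : 0 < Real.sqrt (d * (σmix2 + σI ^ 2)) := Real.sqrt_pos.mpr (by positivity)
  have hB : 0 < Real.sqrt (d * (σ ^ 2 + σI ^ 2)) := Real.sqrt_pos.mpr (by positivity)
  have hA2 : Real.sqrt (d * (σmix2 + σI ^ 2)) ^ 2 = d * (σmix2 + σI ^ 2) :=
    Real.sq_sqrt (by positivity)
  have hB2 : Real.sqrt (d * (σ ^ 2 + σI ^ 2)) ^ 2 = d * (σ ^ 2 + σI ^ 2) :=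
    Real.sq_sqrt (by positivity)
  rw [div_lt_div_iff₀ hB hA]
  rcases le_or_gt (d - η) 0 with hb | hb
  · have hL : (d - η) * Real.sqrt (d * (σmix2 + σI ^ 2)) ≤ 0 := mul_nonpos_of_nonpos_of_nonneg hb hA.le
    have hR : 0 < (η + d) * Real.sqrt (d * (σ ^ 2 + σI ^ 2)) := mul_pos (by linarith) hB
    linarith
  · apply lt_of_pow_lt_pow_left₀ 2 (mul_pos (by linarith) hB).le
    have hsq : ((d - η) * s) * ((d - η) * s) < ((η + d) * σ) * ((η + d) * σ) :=
      mul_self_lt_mul_self (mul_nonneg hb.le hs.le) hkey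
    have hx : (0:ℝ) ≤ σI ^ 2 := sq_nonneg _
    rw [mul_pow, mul_pow, hA2, hB2]
    have k1 : ((d:ℝ) - η) ^ 2 * σmix2 < (η + d) ^ 2 * σ ^ 2 := by
      rw [← hs2]
      have h6 : (((d:ℝ) - η) * s) ^ 2 < ((η + d) * σ) ^ 2 := by
        rw [pow_two, pow_two]; exact hsq
      rw [mul_pow, mul_pow] at h6
      exact h6
    have k2 : ((d:ℝ) - η) ^ 2 * σI ^ 2 ≤ (η + d) ^ 2 * σI ^ 2 := by
      have h5 : ((d:ℝ) - η) ^ 2 ≤ (η + d) ^ 2 :=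
        pow_le_pow_left₀ hb.le (by linarith) 2
      exact mul_le_mul_of_nonneg_right h5 hx
    have hmain : ((d:ℝ) - η) ^ 2 * (σmix2 + σI ^ 2) < (η + d) ^ 2 * (σ ^ 2 + σI ^ 2) := by
      have e2 : ((d:ℝ) - η) ^ 2 * (σmix2 + σI ^ 2)
          = ((d:ℝ) - η) ^ 2 * σmix2 + ((d:ℝ) - η) ^ 2 * σI ^ 2 := by ring
      have e3 : (η + (d:ℝ)) ^ 2 * (σ ^ 2 + σI ^ 2)
          = (η + (d:ℝ)) ^ 2 * σ ^ 2 + (η + (d:ℝ)) ^ 2 * σI ^ 2 := by ring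
      rw [e2, e3]; exact add_lt_add_of_lt_of_le k1 k2
    calc ((d:ℝ) - η) ^ 2 * ((d:ℝ) * (σmix2 + σI ^ 2))
        = (d:ℝ) * (((d:ℝ) - η) ^ 2 * (σmix2 + σI ^ 2)) := by ring
      _ < (d:ℝ) * ((η + d) ^ 2 * (σ ^ 2 + σI ^ 2)) := by
          exact mul_lt_mul_of_pos_left hmain hdpos
      _ = (η + (d:ℝ)) ^ 2 * ((d:ℝ) * (σ ^ 2 + σI ^ 2)) := by ring
end

section
/- Let d ≥ 1 be an integer, let σ > 0, m ∈ ℝ and b ∈ ℝ be real numbers, and let w ∈ ℝ^d be a nonzero vector. Let μ be the product probability measure on ℝ^d (functions Fin d → ℝ) whose coordinates are independent one-dimensional Gaussians gaussianReal m σ². Then μ({x : ⟨w, x⟩ + b < 0}) = Φ(−(b + m·(w₁ + … + w_d))/(σ·‖w‖)), where ‖w‖ = √(w₁² + … + w_d²). -/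
/-!
Under the product measure the characteristic function of `∑ i, w i * x i` factors into the
characteristic functions of the independent Gaussians `w i * x i`, so this linear form is
Gaussian with mean `m ∑ w_i` and variance `σ² ‖w‖²`. Standardising it gives `Φ`; the open
half-line `(-∞, -b)` has the same measure as the closed one since a nondegenerate Gaussian has
no atoms.
-/

open MeasureTheory ProbabilityTheory Real

open Set
open scoped NNReal

section

variable {ι : Type*} [Fintype ι]

lemma gaussianReal_pi_map_sum (μ : ι → ℝ) (v : ι → ℝ≥0) :
    (Measure.pi fun i ↦ gaussianReal (μ i) (v i)).map (fun x ↦ ∑ i, x i)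
      = gaussianReal (∑ i, μ i) (∑ i, v i) := by
  refine Measure.ext_of_charFun (funext fun t ↦ ?_)
  simp_rw [charFun_map_sum_pi_eq_prod, Finset.prod_apply, charFun_gaussianReal,
    ← Complex.exp_sum]
  push_cast
  congr 1
  simp only [Finset.mul_sum, Finset.sum_mul, Finset.sum_div, ← Finset.sum_sub_distrib]

lemma gaussianReal_pi_map_weightedSum (μ : ι → ℝ) (v : ι → ℝ≥0) (w : ι → ℝ) :
    (Measure.pi fun i ↦ gaussianReal (μ i) (v i)).map (fun x ↦ ∑ i, w i * x i)
      = gaussianReal (∑ i, w i * μ i) (∑ i, .mk (w i ^ 2) (sq_nonneg _) * v i) := by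
  have hscale : (fun x : ι → ℝ ↦ ∑ i, w i * x i)
      = (fun y ↦ ∑ i, y i) ∘ (fun x i ↦ w i * x i) := rfl
  rw [hscale, ← Measure.map_map (by fun_prop) (by fun_prop),
    Measure.pi_map_pi (fun i ↦ by fun_prop)]
  simp_rw [gaussianReal_map_const_mul]
  exact gaussianReal_pi_map_sum _ _

end

lemma toReal_gaussianReal_Iio_eq_Phi {μ : ℝ} {v : ℝ≥0} (hv : v ≠ 0) (a : ℝ) :
    (gaussianReal μ v (Iio a)).toReal = Phi ((a - μ) / √v) := by
  have hsqrt : 0 < √(v : ℝ) := Real.sqrt_pos.2 (by positivity)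
  have hstd : (gaussianReal μ v).map (fun x ↦ (x - μ) / √v) = gaussianReal 0 1 := by
    have hcomp : (fun x ↦ (x - μ) / √v) = (· / √v) ∘ (· - μ) := rfl
    rw [hcomp, ← Measure.map_map (by fun_prop) (by fun_prop), gaussianReal_map_sub_const,
      gaussianReal_map_div_const, sub_self, zero_div]
    congr 1
    ext
    simp [hv]
  have hpre : (fun x ↦ (x - μ) / √v) ⁻¹' Iio ((a - μ) / √v) = Iio a := by
    ext x
    simp [div_lt_div_iff_of_pos_right hsqrt]
  have hatom : gaussianReal 0 1 {(a - μ) / √v} = 0 :=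
    gaussianReal_absolutelyContinuous 0 one_ne_zero (measure_singleton _)
  rw [Phi, ← measure_congr (Iio_ae_eq_Iic' hatom), ← hstd,
    Measure.map_apply (by fun_prop) measurableSet_Iio, hpre]

theorem gaussian_halfspace_measure_general
    (d : ℕ)
    (σ m b : ℝ) (hσ : 0 < σ)
    (w : Fin d → ℝ) (hw : w ≠ 0) :
    ((Measure.pi fun _ : Fin d => gaussianReal m ⟨σ ^ 2, sq_nonneg σ⟩)
        {x : Fin d → ℝ | (∑ i, w i * x i) + b < 0}).toReal
      = Phi (-(b + m * ∑ i, w i) / (σ * Real.sqrt (∑ i, (w i) ^ 2))) := by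
  have hnorm : 0 < ∑ i, w i ^ 2 := by
    obtain ⟨i, hi⟩ := Function.ne_iff.1 hw
    exact Finset.sum_pos' (fun j _ ↦ sq_nonneg (w j))
      ⟨i, Finset.mem_univ i, sq_pos_of_ne_zero hi⟩
  have hlaw :=
    gaussianReal_pi_map_weightedSum (fun _ : Fin d ↦ m) (fun _ ↦ ⟨σ ^ 2, sq_nonneg σ⟩) w
  set v : ℝ≥0 := ∑ i, .mk (w i ^ 2) (sq_nonneg _) * ⟨σ ^ 2, sq_nonneg σ⟩ with hv_def
  have hv : (v : ℝ) = σ ^ 2 * ∑ i, w i ^ 2 := by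
    rw [hv_def, NNReal.coe_sum, Finset.mul_sum]
    exact Finset.sum_congr rfl fun i _ ↦ mul_comm _ _
  have hhalf : {x : Fin d → ℝ | (∑ i, w i * x i) + b < 0}
      = (fun x ↦ ∑ i, w i * x i) ⁻¹' Iio (-b) := by
    ext x
    simp [lt_neg_iff_add_neg]
  rw [hhalf, ← Measure.map_apply (by fun_prop) measurableSet_Iio, hlaw,
    toReal_gaussianReal_Iio_eq_Phi (by rw [← NNReal.coe_ne_zero, hv]; positivity), hv,
    Real.sqrt_mul (by positivity), Real.sqrt_sq hσ.le, ← Finset.sum_mul]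
  ring_nf

/-- The probability that a linear functional of an i.i.d. spherical Gaussian vector is
negative, in closed form. -/
theorem gaussian_halfspace_measure
    (d : ℕ) (hd : 1 ≤ d)
    (σ m b : ℝ) (hσ : 0 < σ)
    (w : Fin d → ℝ) (hw : w ≠ 0) :
    ((Measure.pi fun _ : Fin d => gaussianReal m ⟨σ ^ 2, sq_nonneg σ⟩)
        {x : Fin d → ℝ | (∑ i, w i * x i) + b < 0}).toReal
      = Phi (-(b + m * ∑ i, w i) / (σ * Real.sqrt (∑ i, (w i) ^ 2))) :=
  gaussian_halfspace_measure_general d σ m b hσ w hw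
end

section
/- Let d ≥ 1 be an integer, let σ₊ > 0, σ_I > 0, w > 0 and b ∈ ℝ be real numbers, and set η = b/w. Let μ be the product probability measure on ℝ^d with i.i.d. coordinates gaussianReal 1 σ₊², and ν the product probability measure on ℝ^d with i.i.d. coordinates gaussianReal 0 σ_I². Then the product measure μ ⊗ ν assigns to the event {(x, ε) : w·((x₁+ε₁) + … + (x_d+ε_d)) + b > 0} the probability Φ((η + d)/√(d·(σ₊² + σ_I²))); similarly, with μ' the product measure with i.i.d. coordinates gaussianReal (−1) σ₋² (σ₋ > 0), the measure μ' ⊗ ν assigns to the event {(x, ε) : w·((x₁+ε₁) + … + (x_d+ε_d)) + b < 0} the probability Φ((d − η)/√(d·(σ₋² + σ_I²))). -/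
/-!
The score `∑ i, (xᵢ + εᵢ)` is a sum of `2d` independent real Gaussians, so by multiplicativity of
characteristic functions it is Gaussian with mean `±d` and variance `d (σ² + σ_I²)`. Since `w > 0`,
the classifier is correct exactly on the half-line `score > -η` (resp. `score < -η`), whose
probability is `Φ` at the standardized endpoint.
-/

open MeasureTheory ProbabilityTheory Real

open scoped NNReal

lemma map_sum_pi_gaussianReal {ι : Type*} [Fintype ι] (m : ι → ℝ) (v : ι → ℝ≥0) :
    (Measure.pi fun i => gaussianReal (m i) (v i)).map (fun x => ∑ i, x i)
      = gaussianReal (∑ i, m i) (∑ i, v i) := by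
  refine Measure.ext_of_charFun (funext fun t => ?_)
  rw [charFun_map_sum_pi_eq_prod, Finset.prod_apply]
  simp only [charFun_gaussianReal, ← Complex.exp_sum]
  push_cast
  congr 1
  simp only [Finset.sum_sub_distrib, Finset.mul_sum, Finset.sum_mul, Finset.sum_div]

lemma map_sum_add_prod_pi_gaussianReal {ι : Type*} [Fintype ι] (m₁ m₂ : ι → ℝ)
    (v₁ v₂ : ι → ℝ≥0) :
    ((Measure.pi fun i => gaussianReal (m₁ i) (v₁ i)).prod
        (Measure.pi fun i => gaussianReal (m₂ i) (v₂ i))).map (fun q => ∑ i, (q.1 i + q.2 i))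
      = gaussianReal (∑ i, (m₁ i + m₂ i)) (∑ i, (v₁ i + v₂ i)) := by
  have h : (fun q : (ι → ℝ) × (ι → ℝ) => ∑ i, (q.1 i + q.2 i))
      = (fun p : ℝ × ℝ => p.1 + p.2) ∘ Prod.map (fun x => ∑ i, x i) (fun x => ∑ i, x i) := by
    funext q
    simp [Finset.sum_add_distrib]
  rw [h, ← Measure.map_map (by fun_prop) (by fun_prop),
    ← Measure.map_prod_map _ _ (by fun_prop) (by fun_prop), map_sum_pi_gaussianReal,
    map_sum_pi_gaussianReal, ← Measure.conv, gaussianReal_conv_gaussianReal,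
    Finset.sum_add_distrib, Finset.sum_add_distrib]

lemma gaussianReal_map_standardize (μ : ℝ) {v : ℝ≥0} (hv : v ≠ 0) :
    (gaussianReal μ v).map (fun x => (x - μ) / √v) = gaussianReal 0 1 := by
  have h : (fun x => (x - μ) / √v) = (· / √v) ∘ (· - μ) := rfl
  rw [h, ← Measure.map_map (by fun_prop) (by fun_prop), gaussianReal_map_sub_const,
    gaussianReal_map_div_const, sub_self, zero_div]
  congr
  ext
  simp [Real.sq_sqrt, hv]

lemma gaussianReal_Iio_toReal (μ : ℝ) {v : ℝ≥0} (hv : v ≠ 0) (a : ℝ) :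
    (gaussianReal μ v (Set.Iio a)).toReal = Phi ((a - μ) / √v) := by
  have hpos : 0 < √(v : ℝ) := Real.sqrt_pos.mpr (by positivity)
  have hpre : (fun x => (x - μ) / √v) ⁻¹' Set.Iio ((a - μ) / √v) = Set.Iio a := by
    ext x
    simp [div_lt_div_iff_of_pos_right hpos]
  have : NullSingletonClass (gaussianReal 0 1) := nullSingletonClass_gaussianReal one_ne_zero
  rw [← hpre, ← Measure.map_apply (by fun_prop) measurableSet_Iio,
    gaussianReal_map_standardize μ hv, Phi, measure_congr Iio_ae_eq_Iic]

lemma gaussianReal_Ioi_toReal (μ : ℝ) {v : ℝ≥0} (hv : v ≠ 0) (a : ℝ) :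
    (gaussianReal μ v (Set.Ioi a)).toReal = Phi ((μ - a) / √v) := by
  have hpre : Set.Ioi a = (fun x => -x) ⁻¹' Set.Iio (-a) := by
    ext
    simp
  rw [hpre, ← Measure.map_apply measurable_neg measurableSet_Iio, gaussianReal_map_neg,
    gaussianReal_Iio_toReal (-μ) hv, neg_sub_neg]

lemma prod_pi_gaussianReal_mul_sum_add_pos_toReal {ι : Type*} [Fintype ι] (m₁ m₂ : ι → ℝ)
    (v₁ v₂ : ι → ℝ≥0) (hv : ∑ i, (v₁ i + v₂ i) ≠ 0) {w : ℝ} (hw : 0 < w) (b : ℝ) :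
    (((Measure.pi fun i => gaussianReal (m₁ i) (v₁ i)).prod
        (Measure.pi fun i => gaussianReal (m₂ i) (v₂ i)))
        {q | w * (∑ i, (q.1 i + q.2 i)) + b > 0}).toReal
      = Phi ((b / w + ∑ i, (m₁ i + m₂ i)) / √(∑ i, (v₁ i + v₂ i) : ℝ≥0)) := by
  have hset : {q : (ι → ℝ) × (ι → ℝ) | w * (∑ i, (q.1 i + q.2 i)) + b > 0}
      = (fun q => ∑ i, (q.1 i + q.2 i)) ⁻¹' Set.Ioi (-(b / w)) := by
    ext q
    simp only [Set.mem_ofPred_eq, Set.mem_preimage, Set.mem_Ioi, ← neg_div, div_lt_iff₀ hw]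
    constructor <;> intro h <;> linarith
  rw [hset, ← Measure.map_apply (by fun_prop) measurableSet_Ioi,
    map_sum_add_prod_pi_gaussianReal, gaussianReal_Ioi_toReal _ hv, sub_neg_eq_add, add_comm]

lemma prod_pi_gaussianReal_mul_sum_add_neg_toReal {ι : Type*} [Fintype ι] (m₁ m₂ : ι → ℝ)
    (v₁ v₂ : ι → ℝ≥0) (hv : ∑ i, (v₁ i + v₂ i) ≠ 0) {w : ℝ} (hw : 0 < w) (b : ℝ) :
    (((Measure.pi fun i => gaussianReal (m₁ i) (v₁ i)).prod
        (Measure.pi fun i => gaussianReal (m₂ i) (v₂ i)))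
        {q | w * (∑ i, (q.1 i + q.2 i)) + b < 0}).toReal
      = Phi ((-(b / w) - ∑ i, (m₁ i + m₂ i)) / √(∑ i, (v₁ i + v₂ i) : ℝ≥0)) := by
  have hset : {q : (ι → ℝ) × (ι → ℝ) | w * (∑ i, (q.1 i + q.2 i)) + b < 0}
      = (fun q => ∑ i, (q.1 i + q.2 i)) ⁻¹' Set.Iio (-(b / w)) := by
    ext q
    simp only [Set.mem_ofPred_eq, Set.mem_preimage, Set.mem_Iio, ← neg_div, lt_div_iff₀ hw]
    constructor <;> intro h <;> linarith
  rw [hset, ← Measure.map_apply (by fun_prop) measurableSet_Iio,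
    map_sum_add_prod_pi_gaussianReal, gaussianReal_Iio_toReal _ hv]

theorem input_smoothness_formulas_general
    (d : ℕ) (hd : 1 ≤ d)
    (σp σm σI w b : ℝ) (hσI : 0 < σI) (hw : 0 < w)
    (η : ℝ) (hη : η = b / w) :
    (((Measure.pi fun _ : Fin d => gaussianReal 1 ⟨σp ^ 2, sq_nonneg σp⟩).prod
          (Measure.pi fun _ : Fin d => gaussianReal 0 ⟨σI ^ 2, sq_nonneg σI⟩))
        {q : (Fin d → ℝ) × (Fin d → ℝ) | w * (∑ i, (q.1 i + q.2 i)) + b > 0}).toReal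
      = Phi ((η + d) / Real.sqrt (d * (σp ^ 2 + σI ^ 2)))
    ∧ (((Measure.pi fun _ : Fin d => gaussianReal (-1) ⟨σm ^ 2, sq_nonneg σm⟩).prod
          (Measure.pi fun _ : Fin d => gaussianReal 0 ⟨σI ^ 2, sq_nonneg σI⟩))
        {q : (Fin d → ℝ) × (Fin d → ℝ) | w * (∑ i, (q.1 i + q.2 i)) + b < 0}).toReal
      = Phi ((d - η) / Real.sqrt (d * (σm ^ 2 + σI ^ 2))) := by
  have hvar (σ : ℝ) :
      ((∑ _ : Fin d, (⟨σ ^ 2, sq_nonneg σ⟩ + ⟨σI ^ 2, sq_nonneg σI⟩ : ℝ≥0) : ℝ≥0) : ℝ)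
        = d * (σ ^ 2 + σI ^ 2) := by
    simp only [Finset.sum_const, Finset.card_univ, Fintype.card_fin, nsmul_eq_mul, NNReal.coe_mul,
      NNReal.coe_natCast]
    rfl
  have hvar_ne (σ : ℝ) :
      ∑ _ : Fin d, (⟨σ ^ 2, sq_nonneg σ⟩ + ⟨σI ^ 2, sq_nonneg σI⟩ : ℝ≥0) ≠ 0 := by
    rw [← NNReal.coe_ne_zero, hvar]
    have : (0 : ℝ) < d := by exact_mod_cast hd
    positivity
  refine ⟨?_, ?_⟩
  · rw [prod_pi_gaussianReal_mul_sum_add_pos_toReal _ _ _ _ (hvar_ne σp) hw, hvar, hη]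
    simp only [add_zero, Finset.sum_const, Finset.card_univ, Fintype.card_fin, nsmul_eq_mul,
      mul_one]
  · rw [prod_pi_gaussianReal_mul_sum_add_neg_toReal _ _ _ _ (hvar_ne σm) hw, hvar, hη]
    congr 2
    simp only [add_zero, Finset.sum_const, Finset.card_univ, Fintype.card_fin, nsmul_eq_mul]
    ring

/-- Input smoothness formulas: probabilities of correct classification of Gaussian class
samples perturbed by additive input Gaussian noise. -/
theorem input_smoothness_formulas
    (d : ℕ) (hd : 1 ≤ d)
    (σp σm σI w b : ℝ) (hσp : 0 < σp) (hσm : 0 < σm) (hσI : 0 < σI) (hw : 0 < w)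
    (η : ℝ) (hη : η = b / w) :
    (((Measure.pi fun _ : Fin d => gaussianReal 1 ⟨σp ^ 2, sq_nonneg σp⟩).prod
          (Measure.pi fun _ : Fin d => gaussianReal 0 ⟨σI ^ 2, sq_nonneg σI⟩))
        {q : (Fin d → ℝ) × (Fin d → ℝ) | w * (∑ i, (q.1 i + q.2 i)) + b > 0}).toReal
      = Phi ((η + d) / Real.sqrt (d * (σp ^ 2 + σI ^ 2)))
    ∧ (((Measure.pi fun _ : Fin d => gaussianReal (-1) ⟨σm ^ 2, sq_nonneg σm⟩).prod
          (Measure.pi fun _ : Fin d => gaussianReal 0 ⟨σI ^ 2, sq_nonneg σI⟩))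
        {q : (Fin d → ℝ) × (Fin d → ℝ) | w * (∑ i, (q.1 i + q.2 i)) + b < 0}).toReal
      = Phi ((d - η) / Real.sqrt (d * (σm ^ 2 + σI ^ 2))) :=
  input_smoothness_formulas_general d hd σp σm σI w b hσI hw η hη
end

section
/- Let d ≥ 1 be an integer, let σ_P > 0, w > 0 and b ∈ ℝ be real numbers. Let ρ be the product probability measure on ℝ^(d+1) (functions Fin (d+1) → ℝ) with i.i.d. coordinates gaussianReal 0 σ_P². Then ρ({ε : Σ_{i=1}^{d} (w + εᵢ)·1 + (b + ε_{d+1}) > 0}) = Φ((b + d·w)/(√(d+1)·σ_P)) and ρ({ε : Σ_{i=1}^{d} (w + εᵢ)·(−1) + (b + ε_{d+1}) < 0}) = Φ((d·w − b)/(√(d+1)·σ_P)). -/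
open MeasureTheory ProbabilityTheory Real

/-!
At a class centre `±𝟙` the noisy score is `b ± d w` plus a signed sum `∑ cᵢ εᵢ` of the `d + 1`
independent noise terms, with `cᵢ² = 1`. Characteristic functions multiply over the product
measure, so this sum is centred Gaussian with variance `(d + 1) σ_P²`, and the probability of
a half-line under it is `Phi` of the standardized endpoint.
-/

open scoped NNReal

namespace ProbabilityTheory

section SumOfGaussians

variable {ι : Type*} [Fintype ι]

lemma map_pi_gaussianReal_sum (m : ι → ℝ) (v : ι → ℝ≥0) :
    (Measure.pi fun i => gaussianReal (m i) (v i)).map (fun x => ∑ i, x i)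
      = gaussianReal (∑ i, m i) (∑ i, v i) := by
  refine Measure.ext_of_charFun (funext fun t => ?_)
  rw [charFun_map_sum_pi_eq_prod, Finset.prod_apply]
  simp_rw [charFun_gaussianReal, ← Complex.exp_sum]
  push_cast
  rw [Finset.sum_sub_distrib, Finset.mul_sum, Finset.sum_mul, Finset.sum_mul, Finset.sum_div]

lemma map_pi_gaussianReal_sum_mul (m : ι → ℝ) (v : ι → ℝ≥0) (c : ι → ℝ) :
    (Measure.pi fun i => gaussianReal (m i) (v i)).map (fun x => ∑ i, c i * x i)
      = gaussianReal (∑ i, c i * m i) (∑ i, (c i ^ 2).toNNReal * v i) := by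
  have hfactor : (fun x : ι → ℝ => ∑ i, c i * x i)
      = (fun y : ι → ℝ => ∑ i, y i) ∘ (fun x i => c i * x i) := rfl
  rw [hfactor, ← Measure.map_map (by fun_prop) (by fun_prop),
    Measure.pi_map_pi (fun i => by fun_prop)]
  simp_rw [gaussianReal_map_const_mul, map_pi_gaussianReal_sum,
    Real.toNNReal_of_nonneg (sq_nonneg _)]

lemma map_pi_gaussianReal_sum_mul_of_sq_eq_one (v : ℝ≥0) {c : ι → ℝ} (hc : ∀ i, c i ^ 2 = 1) :
    (Measure.pi fun _ : ι => gaussianReal 0 v).map (fun x => ∑ i, c i * x i)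
      = gaussianReal 0 (Fintype.card ι • v) := by
  simp [map_pi_gaussianReal_sum_mul, hc]

end SumOfGaussians

section HalfLines

variable {μ : ℝ} {v : ℝ≥0}

lemma toReal_gaussianReal_Iic (hv : v ≠ 0) (s : ℝ) :
    (gaussianReal μ v (Set.Iic s)).toReal = Phi ((s - μ) / √v) := by
  have hσ : 0 < √(v : ℝ) := Real.sqrt_pos.2 (by positivity)
  have hstd : (gaussianReal μ v).map (fun x => (x - μ) / √v) = gaussianReal 0 1 := by
    have hcomp : (fun x => (x - μ) / √v) = (· / √(v : ℝ)) ∘ (· - μ) := rfl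
    rw [hcomp, ← Measure.map_map (by fun_prop) (by fun_prop), gaussianReal_map_sub_const,
      gaussianReal_map_div_const, sub_self, zero_div]
    congr 1
    ext
    simp [Real.sq_sqrt, hv]
  have hpre : (fun x => (x - μ) / √v) ⁻¹' Set.Iic ((s - μ) / √v) = Set.Iic s := by
    ext x
    simp [div_le_div_iff_of_pos_right hσ]
  rw [Phi, ← hstd, Measure.map_apply (by fun_prop) measurableSet_Iic, hpre]

lemma toReal_gaussianReal_Iio (hv : v ≠ 0) (s : ℝ) :
    (gaussianReal μ v (Set.Iio s)).toReal = Phi ((s - μ) / √v) := by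
  have := nullSingletonClass_gaussianReal (μ := μ) hv
  rw [measure_congr Iio_ae_eq_Iic, toReal_gaussianReal_Iic hv]

lemma toReal_gaussianReal_Ioi (hv : v ≠ 0) (s : ℝ) :
    (gaussianReal μ v (Set.Ioi s)).toReal = Phi ((μ - s) / √v) := by
  have hpre : (fun x : ℝ => -x) ⁻¹' Set.Iio (-s) = Set.Ioi s := by
    ext x
    simp
  rw [← hpre, ← Measure.map_apply (by fun_prop) measurableSet_Iio, gaussianReal_map_neg,
    toReal_gaussianReal_Iio hv]
  ring_nf

end HalfLines

end ProbabilityTheory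

theorem parameter_smoothness_formulas_general
    (d : ℕ)
    (σP w b : ℝ) (hσP : 0 < σP) :
    ((Measure.pi fun _ : Fin (d + 1) => gaussianReal 0 ⟨σP ^ 2, sq_nonneg σP⟩)
        {ε : Fin (d + 1) → ℝ |
          (∑ i : Fin d, (w + ε (Fin.castSucc i)) * 1) + (b + ε (Fin.last d)) > 0}).toReal
      = Phi ((b + d * w) / (Real.sqrt (d + 1) * σP))
    ∧ ((Measure.pi fun _ : Fin (d + 1) => gaussianReal 0 ⟨σP ^ 2, sq_nonneg σP⟩)
        {ε : Fin (d + 1) → ℝ |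
          (∑ i : Fin d, (w + ε (Fin.castSucc i)) * (-1)) + (b + ε (Fin.last d)) < 0}).toReal
      = Phi ((d * w - b) / (Real.sqrt (d + 1) * σP)) := by
  set v : ℝ≥0 := ⟨σP ^ 2, sq_nonneg σP⟩
  have hV : ((d + 1) • v : ℝ≥0) = ((d + 1) * σP ^ 2 : ℝ) := by
    push_cast [nsmul_eq_mul]
    rfl
  have hV₀ : (d + 1) • v ≠ 0 := by
    rw [← NNReal.coe_ne_zero, hV]
    positivity
  have hsqrt : √((d + 1) • v : ℝ≥0) = √(d + 1) * σP := by
    rw [hV, Real.sqrt_mul (by positivity), Real.sqrt_sq hσP.le]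
  set c : Fin (d + 1) → ℝ := Fin.snoc (fun _ => -1) 1
  have hc : ∀ i, c i ^ 2 = 1 := fun i => by induction i using Fin.lastCases <;> simp [c]
  constructor
  · have hset : {ε : Fin (d + 1) → ℝ |
        (∑ i : Fin d, (w + ε (Fin.castSucc i)) * 1) + (b + ε (Fin.last d)) > 0}
        = (fun ε => ∑ i, 1 * ε i) ⁻¹' Set.Ioi (-(b + d * w)) := by
      ext ε
      simp [Fin.sum_univ_castSucc, Finset.sum_add_distrib]
      constructor <;> intro h <;> linarith
    rw [hset, ← Measure.map_apply (by fun_prop) measurableSet_Ioi,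
      map_pi_gaussianReal_sum_mul_of_sq_eq_one v (fun _ => one_pow 2), Fintype.card_fin,
      toReal_gaussianReal_Ioi hV₀, hsqrt, zero_sub, neg_neg]
  · have hset : {ε : Fin (d + 1) → ℝ |
        (∑ i : Fin d, (w + ε (Fin.castSucc i)) * (-1)) + (b + ε (Fin.last d)) < 0}
        = (fun ε => ∑ i, c i * ε i) ⁻¹' Set.Iio (d * w - b) := by
      ext ε
      simp [c, Fin.sum_univ_castSucc, Finset.sum_add_distrib]
      constructor <;> intro h <;> linarith
    rw [hset, ← Measure.map_apply (by fun_prop) measurableSet_Iio,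
      map_pi_gaussianReal_sum_mul_of_sq_eq_one v hc, Fintype.card_fin,
      toReal_gaussianReal_Iio hV₀, hsqrt, sub_zero]

/-- Parameter smoothness formulas: probabilities that the linear classifier, with i.i.d.
Gaussian noise added to each of the d weights and the bias, correctly classifies the two
class centers. -/
theorem parameter_smoothness_formulas
    (d : ℕ) (hd : 1 ≤ d)
    (σP w b : ℝ) (hσP : 0 < σP) (hw : 0 < w) :
    ((Measure.pi fun _ : Fin (d + 1) => gaussianReal 0 ⟨σP ^ 2, sq_nonneg σP⟩)
        {ε : Fin (d + 1) → ℝ |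
          (∑ i : Fin d, (w + ε (Fin.castSucc i)) * 1) + (b + ε (Fin.last d)) > 0}).toReal
      = Phi ((b + d * w) / (Real.sqrt (d + 1) * σP))
    ∧ ((Measure.pi fun _ : Fin (d + 1) => gaussianReal 0 ⟨σP ^ 2, sq_nonneg σP⟩)
        {ε : Fin (d + 1) → ℝ |
          (∑ i : Fin d, (w + ε (Fin.castSucc i)) * (-1)) + (b + ε (Fin.last d)) < 0}).toReal
      = Phi ((d * w - b) / (Real.sqrt (d + 1) * σP)) :=
  parameter_smoothness_formulas_general d σP w b hσP
end
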